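/- arXiv:2106.07841 — 3 statements merged into one kernel-verified Lean document; each statement's English description precedes it below -/
import Mathlib

section
/- Let d, k be positive integers, H > 0, λ > 0. Let φ_1, …, φ_{k-1} ∈ ℝ^d with ‖φ_τ‖ ≤ 1 for all τ, and let y_1, …, y_{k-1} ∈ ℝ with 0 ≤ y_τ ≤ 2H for all τ. Set Λ = Σ_{τ=1}^{k-1} φ_τ φ_τᵀ + λ I_d. Then ‖ Λ^{-1} Σ_{τ=1}^{k-1} y_τ φ_τ ‖ ≤ 2H √(k d / λ). -/
open Matrix

/-! With `s = ∑ τ, y τ • φ τ` and `Λ w = s`, put `Q = w ⬝ᵥ Λ w = ∑ τ, (φ τ ⬝ᵥ w) ^ 2 + λ ‖w‖²`.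
Pairing the normal equation with `w` gives `Q = ∑ τ, y τ (φ τ ⬝ᵥ w)`, so by Cauchy–Schwarz
`Q² ≤ (k - 1) (2H)² ∑ τ, (φ τ ⬝ᵥ w) ^ 2 ≤ (k - 1) (2H)² Q`. Hence `λ ‖w‖² ≤ Q ≤ (k - 1) (2H)²`. -/

section RegularizedGram

variable {ι n : Type*} [Fintype ι] [Fintype n] [DecidableEq n]

def regularizedGram (φ : ι → n → ℝ) (lam : ℝ) : Matrix n n ℝ :=
  (∑ τ, vecMulVec (φ τ) (φ τ)) + lam • (1 : Matrix n n ℝ)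

theorem posDef_regularizedGram (φ : ι → n → ℝ) {lam : ℝ} (hlam : 0 < lam) :
    (regularizedGram φ lam).PosDef :=
  PosDef.posSemidef_add
    (posSemidef_sum Finset.univ fun τ _ => by simpa using posSemidef_vecMulVec_self_star (φ τ))
    (PosDef.one.smul hlam)

theorem dotProduct_regularizedGram_mulVec (φ : ι → n → ℝ) (lam : ℝ) (v : n → ℝ) :
    v ⬝ᵥ (regularizedGram φ lam *ᵥ v) = ∑ τ, (φ τ ⬝ᵥ v) ^ 2 + lam * (v ⬝ᵥ v) := by
  simp only [regularizedGram, add_mulVec, Matrix.sum_mulVec, vecMulVec_mulVec, smul_mulVec,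
    one_mulVec, dotProduct_add, dotProduct_sum, dotProduct_smul, smul_eq_mul]
  simp only [op_smul_eq_mul, dotProduct_comm v, sq]

theorem sq_sum_mul_le_card_mul_sq_mul_sum_sq (y a : ι → ℝ) {B : ℝ} (hy : ∀ τ, |y τ| ≤ B) :
    (∑ τ, y τ * a τ) ^ 2 ≤ Fintype.card ι * B ^ 2 * ∑ τ, a τ ^ 2 := by
  have hy_sq : ∑ τ, y τ ^ 2 ≤ Fintype.card ι * B ^ 2 :=
    calc ∑ τ, y τ ^ 2 ≤ ∑ _τ : ι, B ^ 2 :=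
          Finset.sum_le_sum fun τ _ => sq_le_sq' (abs_le.mp (hy τ)).1 (abs_le.mp (hy τ)).2
      _ = Fintype.card ι * B ^ 2 := by simp
  calc (∑ τ, y τ * a τ) ^ 2 ≤ (∑ τ, y τ ^ 2) * ∑ τ, a τ ^ 2 :=
        Finset.sum_mul_sq_le_sq_mul_sq _ _ _
    _ ≤ Fintype.card ι * B ^ 2 * ∑ τ, a τ ^ 2 := by gcongr

theorem dotProduct_self_le_of_regularizedGram_mulVec_eq (φ : ι → n → ℝ) {lam : ℝ}
    (hlam : 0 < lam) (y : ι → ℝ) {B : ℝ} (hy : ∀ τ, |y τ| ≤ B) {w : n → ℝ}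
    (hw : regularizedGram φ lam *ᵥ w = ∑ τ, y τ • φ τ) :
    w ⬝ᵥ w ≤ Fintype.card ι * B ^ 2 / lam := by
  set A := ∑ τ, (φ τ ⬝ᵥ w) ^ 2
  set Q := w ⬝ᵥ (regularizedGram φ lam *ᵥ w)
  have hQ : Q = A + lam * (w ⬝ᵥ w) := dotProduct_regularizedGram_mulVec φ lam w
  have hQ_sq : Q ^ 2 ≤ Fintype.card ι * B ^ 2 * A := by
    have : Q = ∑ τ, y τ * (φ τ ⬝ᵥ w) := by
      simp only [Q, hw, dotProduct_sum, dotProduct_smul, smul_eq_mul, dotProduct_comm w (φ _)]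
    exact this ▸ sq_sum_mul_le_card_mul_sq_mul_sum_sq y _ hy
  have hA : 0 ≤ A := by positivity
  have hN : 0 ≤ w ⬝ᵥ w := dotProduct_self_star_nonneg w
  have hc : 0 ≤ (Fintype.card ι : ℝ) * B ^ 2 := by positivity
  have hQ_le : Q ≤ Fintype.card ι * B ^ 2 := by
    nlinarith [mul_le_mul_of_nonneg_left (show A ≤ Q by nlinarith) hc]
  rw [le_div_iff₀ hlam]
  linarith

end RegularizedGram

theorem stmt_7_general (d k : ℕ) (hd : 0 < d) (H lam : ℝ) (hH : 0 < H)
    (hlam : 0 < lam)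
    (φ : Fin (k - 1) → Fin d → ℝ)
    (y : Fin (k - 1) → ℝ) (hy : ∀ τ, 0 ≤ y τ ∧ y τ ≤ 2 * H) :
    let Λ : Matrix (Fin d) (Fin d) ℝ :=
      (∑ τ, vecMulVec (φ τ) (φ τ)) + lam • (1 : Matrix (Fin d) (Fin d) ℝ)
    Real.sqrt ((Λ⁻¹ *ᵥ ∑ τ, y τ • φ τ) ⬝ᵥ (Λ⁻¹ *ᵥ ∑ τ, y τ • φ τ))
      ≤ 2 * H * Real.sqrt (k * d / lam) := by
  intro Λ
  have hΛ : Λ *ᵥ (Λ⁻¹ *ᵥ ∑ τ, y τ • φ τ) = ∑ τ, y τ • φ τ := by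
    rw [mulVec_mulVec, mul_nonsing_inv Λ (posDef_regularizedGram φ hlam).det_pos.ne'.isUnit,
      one_mulVec]
  have hy_abs (τ) : |y τ| ≤ 2 * H := abs_le.mpr ⟨by linarith [(hy τ).1], (hy τ).2⟩
  have hk : ((k - 1 : ℕ) : ℝ) ≤ k * d := by
    exact_mod_cast (Nat.sub_le k 1).trans (Nat.le_mul_of_pos_right k hd)
  have hbound := dotProduct_self_le_of_regularizedGram_mulVec_eq φ hlam y hy_abs hΛ
  rw [Fintype.card_fin] at hbound
  calc _ ≤ Real.sqrt ((2 * H) ^ 2 * (k * d / lam)) := by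
        refine Real.sqrt_le_sqrt (hbound.trans ?_)
        rw [mul_comm, ← mul_div_assoc]
        gcongr
    _ = 2 * H * Real.sqrt (k * d / lam) := by
        rw [Real.sqrt_mul (sq_nonneg _), Real.sqrt_sq (by positivity)]

/-- Boundedness of the ridge-regression weight vector: if `‖φ_τ‖ ≤ 1`, `0 ≤ y_τ ≤ 2H` and
`Λ = ∑ φ_τ φ_τᵀ + λ I`, then `‖Λ⁻¹ ∑ y_τ φ_τ‖ ≤ 2H √(kd/λ)`. -/
theorem stmt_7 (d k : ℕ) (hd : 0 < d) (hk : 0 < k) (H lam : ℝ) (hH : 0 < H)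
    (hlam : 0 < lam)
    (φ : Fin (k - 1) → Fin d → ℝ) (hφ : ∀ τ, Real.sqrt (φ τ ⬝ᵥ φ τ) ≤ 1)
    (y : Fin (k - 1) → ℝ) (hy : ∀ τ, 0 ≤ y τ ∧ y τ ≤ 2 * H) :
    let Λ : Matrix (Fin d) (Fin d) ℝ :=
      (∑ τ, vecMulVec (φ τ) (φ τ)) + lam • (1 : Matrix (Fin d) (Fin d) ℝ)
    Real.sqrt ((Λ⁻¹ *ᵥ ∑ τ, y τ • φ τ) ⬝ᵥ (Λ⁻¹ *ᵥ ∑ τ, y τ • φ τ))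
      ≤ 2 * H * Real.sqrt (k * d / lam) :=
  stmt_7_general d k hd H lam hH hlam φ y hy
end

section
/- Let λ > 0, let t be a positive integer, let φ_1, …, φ_t ∈ ℝ^d, and set Λ = λ I_d + Σ_{i=1}^{t} φ_i φ_iᵀ. Then Σ_{i=1}^{t} φ_iᵀ Λ^{-1} φ_i ≤ d. -/
open Matrix

/-!
With `S = ∑ φᵢ φᵢᵀ` and `Λ = λ I + S`, the sum equals `tr (Λ⁻¹ S) = tr (Λ⁻¹ (Λ - λ I)) = d - λ tr Λ⁻¹`,
and `tr Λ⁻¹ ≥ 0` because `Λ⁻¹` is positive definite.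
-/

namespace Matrix

variable {n : Type*} [Fintype n]

theorem sum_dotProduct_mulVec_eq_trace_mul_sum_vecMulVec {R ι : Type*} [CommSemiring R]
    [Fintype ι] (A : Matrix n n R) (v : ι → n → R) :
    ∑ i, v i ⬝ᵥ (A *ᵥ v i) = trace (A * ∑ i, vecMulVec (v i) (v i)) := by
  simp only [Matrix.mul_sum, trace_sum, mul_vecMulVec, trace_vecMulVec, dotProduct_comm]

variable [DecidableEq n]

theorem trace_inv_smul_one_add_mul {R : Type*} [CommRing R] {c : R} {S : Matrix n n R}
    (h : IsUnit (c • 1 + S).det) :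
    trace ((c • 1 + S)⁻¹ * S) = Fintype.card n - c * trace (c • 1 + S)⁻¹ := by
  calc trace ((c • 1 + S)⁻¹ * S)
      = trace ((c • 1 + S)⁻¹ * (c • 1 + S) - c • (c • 1 + S)⁻¹) := by
        rw [Matrix.mul_add, Matrix.mul_smul, mul_one, add_sub_cancel_left]
    _ = Fintype.card n - c * trace (c • 1 + S)⁻¹ := by
        rw [nonsing_inv_mul _ h, trace_sub, trace_one, trace_smul, smul_eq_mul]

open scoped ComplexOrder in
theorem trace_inv_smul_one_add_mul_le_card {𝕜 : Type*} [RCLike 𝕜] {S : Matrix n n 𝕜}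
    (hS : S.PosSemidef) {c : 𝕜} (hc : 0 < c) :
    trace ((c • 1 + S)⁻¹ * S) ≤ Fintype.card n := by
  have hc1 : (c • 1 : Matrix n n 𝕜).PosDef := by
    rw [smul_one_eq_diagonal]
    exact posDef_diagonal_iff.mpr fun _ ↦ hc
  have hΛ : (c • 1 + S).PosDef := hc1.add_posSemidef hS
  rw [trace_inv_smul_one_add_mul ((isUnit_iff_isUnit_det _).mp hΛ.isUnit)]
  exact sub_le_self _ (mul_nonneg hc.le hΛ.inv.posSemidef.trace_nonneg)

end Matrix

theorem stmt_9_general (d t : ℕ) (lam : ℝ) (hlam : 0 < lam)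
    (φ : Fin t → Fin d → ℝ) :
    ∑ i, φ i ⬝ᵥ
        ((lam • (1 : Matrix (Fin d) (Fin d) ℝ) + ∑ j, vecMulVec (φ j) (φ j))⁻¹ *ᵥ φ i)
      ≤ (d : ℝ) := by
  have hS : (∑ j, vecMulVec (φ j) (φ j)).PosSemidef :=
    posSemidef_sum _ fun j _ ↦ by
      simpa only [star_trivial] using posSemidef_vecMulVec_self_star (φ j)
  rw [sum_dotProduct_mulVec_eq_trace_mul_sum_vecMulVec]
  simpa only [Fintype.card_fin] using trace_inv_smul_one_add_mul_le_card hS hlam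

/-- Lemma D.1 of Jin et al.: with `Λ = λ I + ∑ φᵢ φᵢᵀ` (λ > 0), one has
`∑ᵢ φᵢᵀ Λ⁻¹ φᵢ ≤ d`. -/
theorem stmt_9 (d t : ℕ) (ht : 0 < t) (lam : ℝ) (hlam : 0 < lam)
    (φ : Fin t → Fin d → ℝ) :
    ∑ i, φ i ⬝ᵥ
        ((lam • (1 : Matrix (Fin d) (Fin d) ℝ) + ∑ j, vecMulVec (φ j) (φ j))⁻¹ *ᵥ φ i)
      ≤ (d : ℝ) :=
  stmt_9_general d t lam hlam φ
end

section
/- Let K be a positive integer and let φ_1, …, φ_K ∈ ℝ^d with ‖φ_k‖ ≤ 1 for all k. For each k ∈ {1, …, K}, set Λ_k = I_d + Σ_{τ=1}^{k-1} φ_τ φ_τᵀ. Then Σ_{k=1}^{K} √( φ_kᵀ (Λ_k)^{-1} φ_k ) ≤ √( 2 d K log(1 + K) ). -/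
/-!
With `x_k = φ_kᵀ Λ_k⁻¹ φ_k`, the matrix determinant lemma telescopes `det Λ_{K+1}` into
`∏ (1 + x_k)`, while AM–GM on the eigenvalues bounds it by `(tr Λ_{K+1} / d) ^ d ≤ (1 + K) ^ d`.
Since `0 ≤ x_k ≤ ‖φ_k‖² ≤ 1` and `x ≤ 2 log (1 + x)` on `[0, 1]`, this gives
`∑ x_k ≤ 2 d log (1 + K)`, and Cauchy–Schwarz turns it into the bound on `∑ √x_k`.
-/

open Matrix Finset Real

lemma Real.le_two_mul_log_one_add {x : ℝ} (hx₀ : 0 ≤ x) (hx₂ : x ≤ 2) : x ≤ 2 * log (1 + x) := by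
  refine le_trans ?_ (mul_le_mul_of_nonneg_left (le_log_one_add_of_nonneg hx₀) zero_le_two)
  rw [mul_div_assoc', le_div_iff₀ (by linarith)]
  nlinarith

namespace Matrix

lemma det_add_vecMulVec {R n : Type*} [CommRing R] [Fintype n] [DecidableEq n]
    {A : Matrix n n R} (hA : IsUnit A.det) (u v : n → R) :
    (A + vecMulVec u v).det = A.det * (1 + v ⬝ᵥ (A⁻¹ *ᵥ u)) := by
  rw [vecMulVec_eq Unit, det_add_replicateCol_mul_replicateRow hA, Matrix.mul_assoc,
    ← replicateCol_mulVec, replicateRow_mul_replicateCol]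
  simp [det_unique]

variable {n ι : Type*} [Fintype n]

lemma posSemidef_sum_vecMulVec_self (φ : ι → n → ℝ) (s : Finset ι) :
    (∑ τ ∈ s, vecMulVec (φ τ) (φ τ)).PosSemidef :=
  posSemidef_sum s fun τ _ => by simpa using posSemidef_vecMulVec_self_star (φ τ)

variable [DecidableEq n]

lemma dotProduct_inv_one_add_mulVec_le {S : Matrix n n ℝ} (hS : S.PosSemidef) (v : n → ℝ) :
    v ⬝ᵥ ((1 + S)⁻¹ *ᵥ v) ≤ v ⬝ᵥ v := by
  have hdet : IsUnit (1 + S).det := (PosDef.one.add_posSemidef hS).det_pos.ne'.isUnit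
  set y := (1 + S)⁻¹ *ᵥ v
  have hv : v = y + S *ᵥ y := by
    have : (1 + S) *ᵥ y = v := by rw [mulVec_mulVec, mul_nonsing_inv _ hdet, one_mulVec]
    rwa [add_mulVec, one_mulVec, eq_comm] at this
  have hSy : 0 ≤ y ⬝ᵥ (S *ᵥ y) := by simpa using hS.dotProduct_mulVec_nonneg y
  have hSy2 : 0 ≤ (S *ᵥ y) ⬝ᵥ (S *ᵥ y) := sum_nonneg fun i _ => mul_self_nonneg _
  rw [hv]
  simp only [add_dotProduct, dotProduct_add, dotProduct_comm (S *ᵥ y) y]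
  linarith

lemma det_le_trace_div_card_pow {A : Matrix n n ℝ} (hA : A.PosSemidef) :
    A.det ≤ (A.trace / Fintype.card n) ^ Fintype.card n := by
  rcases isEmpty_or_nonempty n with hn | hn
  · simp
  set d := Fintype.card n
  set z := hA.isHermitian.eigenvalues
  have hz : ∀ i, 0 ≤ z i := hA.eigenvalues_nonneg
  have hd : (d : ℝ) ≠ 0 := by simp [d]
  have htr : A.trace = ∑ i, z i := by simpa using hA.isHermitian.trace_eq_sum_eigenvalues
  have hdet : A.det = ∏ i, z i := by simpa using hA.isHermitian.det_eq_prod_eigenvalues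
  have amgm : ∏ i, z i ^ (d : ℝ)⁻¹ ≤ A.trace / d := by
    have := geom_mean_le_arith_mean_weighted univ (fun _ => (d : ℝ)⁻¹) z
      (fun _ _ => by positivity) (by simp [d, hd]) (fun i _ => hz i)
    rwa [← mul_sum, inv_mul_eq_div, ← htr] at this
  have hpow : (∏ i, z i ^ (d : ℝ)⁻¹) ^ d = A.det := by
    rw [hdet, ← prod_pow]
    refine prod_congr rfl fun i _ => ?_
    rw [← rpow_natCast, ← rpow_mul (hz i), inv_mul_cancel₀ hd, rpow_one]
  rw [← hpow]
  exact pow_le_pow_left₀ (prod_nonneg fun i _ => rpow_nonneg (hz i) _) amgm d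

def designMatrix (φ : ι → n → ℝ) (s : Finset ι) : Matrix n n ℝ :=
  1 + ∑ τ ∈ s, vecMulVec (φ τ) (φ τ)

variable (φ : ι → n → ℝ)

lemma posDef_designMatrix (s : Finset ι) : (designMatrix φ s).PosDef :=
  PosDef.one.add_posSemidef (posSemidef_sum_vecMulVec_self φ s)

lemma trace_designMatrix (s : Finset ι) :
    (designMatrix φ s).trace = Fintype.card n + ∑ τ ∈ s, φ τ ⬝ᵥ φ τ := by
  simp [designMatrix, trace_sum, trace_vecMulVec]

lemma det_designMatrix_insert [DecidableEq ι] {s : Finset ι} {a : ι} (ha : a ∉ s) :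
    (designMatrix φ (insert a s)).det
      = (designMatrix φ s).det * (1 + φ a ⬝ᵥ ((designMatrix φ s)⁻¹ *ᵥ φ a)) := by
  have hinsert : designMatrix φ (insert a s) = designMatrix φ s + vecMulVec (φ a) (φ a) := by
    simp only [designMatrix, sum_insert ha]; abel
  rw [hinsert]
  exact det_add_vecMulVec (posDef_designMatrix φ s).det_pos.ne'.isUnit _ _

lemma log_det_designMatrix_le (s : Finset ι) (hφ : ∀ k ∈ s, φ k ⬝ᵥ φ k ≤ 1) :
    log (designMatrix φ s).det ≤ Fintype.card n * log (1 + #s) := by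
  have hΛ := posDef_designMatrix φ s
  have htr : (designMatrix φ s).trace / Fintype.card n ≤ 1 + #s := by
    rcases (Fintype.card n).eq_zero_or_pos with hd | hd
    · simp only [hd, CharP.cast_eq_zero, div_zero]; positivity
    have hsum : ∑ τ ∈ s, φ τ ⬝ᵥ φ τ ≤ #s := (sum_le_sum hφ).trans_eq (by simp)
    have hd1 : (1 : ℝ) ≤ Fintype.card n := by exact_mod_cast hd
    rw [div_le_iff₀ (by positivity), trace_designMatrix]
    nlinarith
  have hdet : (designMatrix φ s).det ≤ (1 + #s) ^ Fintype.card n :=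
    (det_le_trace_div_card_pow hΛ.posSemidef).trans <|
      pow_le_pow_left₀ (div_nonneg hΛ.posSemidef.trace_nonneg (Nat.cast_nonneg _)) htr _
  calc log (designMatrix φ s).det ≤ log ((1 + #s) ^ Fintype.card n) := log_le_log hΛ.det_pos hdet
    _ = Fintype.card n * log (1 + #s) := by rw [log_pow]

variable [LinearOrder ι]

noncomputable def ellipticalPotential (s : Finset ι) (k : ι) : ℝ :=
  φ k ⬝ᵥ ((designMatrix φ {τ ∈ s | τ < k})⁻¹ *ᵥ φ k)

lemma ellipticalPotential_nonneg (s : Finset ι) (k : ι) : 0 ≤ ellipticalPotential φ s k := by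
  simpa [ellipticalPotential] using
    (posDef_designMatrix φ _).inv.posSemidef.dotProduct_mulVec_nonneg (φ k)

lemma ellipticalPotential_le (s : Finset ι) (k : ι) : ellipticalPotential φ s k ≤ φ k ⬝ᵥ φ k :=
  dotProduct_inv_one_add_mulVec_le (posSemidef_sum_vecMulVec_self φ _) (φ k)

lemma det_designMatrix_eq_prod (s : Finset ι) :
    (designMatrix φ s).det = ∏ k ∈ s, (1 + ellipticalPotential φ s k) := by
  induction s using Finset.induction_on_max with
  | empty => simp [designMatrix]
  | insert a s hlt ih =>
    have ha : a ∉ s := fun h => lt_irrefl a (hlt a h)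
    have hfa : {τ ∈ insert a s | τ < a} = s := by
      ext τ; simp only [mem_filter, mem_insert]; constructor
      · rintro ⟨rfl | h, hτ⟩ <;> [exact absurd hτ (lt_irrefl _); exact h]
      · exact fun h => ⟨Or.inr h, hlt τ h⟩
    have hfk : ∀ k ∈ s, {τ ∈ insert a s | τ < k} = {τ ∈ s | τ < k} := fun k hk => by
      rw [filter_insert, if_neg (hlt k hk).not_gt]
    rw [det_designMatrix_insert φ ha, prod_insert ha, ih, mul_comm, ellipticalPotential, hfa]
    congr 1
    exact prod_congr rfl fun k hk => by rw [ellipticalPotential, ellipticalPotential, hfk k hk]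

theorem sum_sqrt_ellipticalPotential_le (s : Finset ι) (hφ : ∀ k ∈ s, φ k ⬝ᵥ φ k ≤ 1) :
    ∑ k ∈ s, √(ellipticalPotential φ s k) ≤ √(2 * Fintype.card n * #s * log (1 + #s)) := by
  set x := ellipticalPotential φ s
  have hx₀ : ∀ k, 0 ≤ x k := ellipticalPotential_nonneg φ s
  have hsum : ∑ k ∈ s, x k ≤ 2 * (Fintype.card n * log (1 + #s)) :=
    calc ∑ k ∈ s, x k ≤ ∑ k ∈ s, 2 * log (1 + x k) := sum_le_sum fun k hk =>
          le_two_mul_log_one_add (hx₀ k) (by linarith [ellipticalPotential_le φ s k, hφ k hk])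
      _ = 2 * log (designMatrix φ s).det := by
          rw [← mul_sum, det_designMatrix_eq_prod, log_prod fun k _ => by linarith [hx₀ k]]
      _ ≤ 2 * (Fintype.card n * log (1 + #s)) := by
          gcongr; exact log_det_designMatrix_le φ s hφ
  calc ∑ k ∈ s, √(x k) = ∑ k ∈ s, √(x k) * √1 := by simp
    _ ≤ √(∑ k ∈ s, x k) * √(∑ k ∈ s, 1) := sum_sqrt_mul_sqrt_le s hx₀ fun _ => zero_le_one
    _ = √(#s * ∑ k ∈ s, x k) := by rw [← sqrt_mul (sum_nonneg fun k _ => hx₀ k), mul_comm]; simp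
    _ ≤ √(2 * Fintype.card n * #s * log (1 + #s)) := sqrt_le_sqrt <| by nlinarith

end Matrix

theorem stmt_11_general (d K : ℕ)
    (φ : Fin K → Fin d → ℝ) (hφ : ∀ k, Real.sqrt (φ k ⬝ᵥ φ k) ≤ 1) :
    ∑ k : Fin K,
        Real.sqrt (φ k ⬝ᵥ
          (((1 : Matrix (Fin d) (Fin d) ℝ)
              + ∑ τ ∈ Finset.Iio k, vecMulVec (φ τ) (φ τ))⁻¹ *ᵥ φ k))
      ≤ Real.sqrt (2 * d * K * Real.log (1 + K)) := by
  simpa [ellipticalPotential, designMatrix, filter_gt_eq_Iio] using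
    sum_sqrt_ellipticalPotential_le φ univ fun k _ => Real.sqrt_le_one.mp (hφ k)

/-- With `‖φ_k‖ ≤ 1` and `Λ_k = I + ∑_{τ<k} φ_τ φ_τᵀ`, one has
`∑_k √(φ_kᵀ Λ_k⁻¹ φ_k) ≤ √(2 d K log(1 + K))`. -/
theorem stmt_11 (d K : ℕ) (hK : 0 < K)
    (φ : Fin K → Fin d → ℝ) (hφ : ∀ k, Real.sqrt (φ k ⬝ᵥ φ k) ≤ 1) :
    ∑ k : Fin K,
        Real.sqrt (φ k ⬝ᵥ
          (((1 : Matrix (Fin d) (Fin d) ℝ)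
              + ∑ τ ∈ Finset.Iio k, vecMulVec (φ τ) (φ τ))⁻¹ *ᵥ φ k))
      ≤ Real.sqrt (2 * d * K * Real.log (1 + K)) :=
  stmt_11_general d K φ hφ
end
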